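/- In λ_S, ⟨(λx.t0) ⟨t1⟩⟩ and (λx.⟨t0⟩) ⟨t1⟩ are applicatively bisimilar for all terms t0 (with fv(t0) ⊆ {x}) and closed t1. -/

import Mathlib

namespace LamS

/-- Terms of the λ-calculus with shift and reset, in de Bruijn representation.
    `lam` and `shift` bind variable 0. -/
inductive Tm : Type
  | var : ℕ → Tm
  | lam : Tm → Tm
  | app : Tm → Tm → Tm
  | shift : Tm → Tm
  | reset : Tm → Tm
  deriving DecidableEq

open Tm

/-- Lift (shift up) free de Bruijn indices `≥ c` by `d`. -/
def liftT (d : ℕ) : ℕ → Tm → Tm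
  | c, var n => if n < c then var n else var (n + d)
  | c, lam t => lam (liftT d (c+1) t)
  | c, app a b => app (liftT d c a) (liftT d c b)
  | c, shift t => shift (liftT d (c+1) t)
  | c, reset t => reset (liftT d c t)

/-- Capture-avoiding substitution `t[j := s]` (de Bruijn). -/
def substT : ℕ → Tm → Tm → Tm
  | j, s, var n => if n = j then liftT j 0 s else if j < n then var (n-1) else var n
  | j, s, lam t => lam (substT (j+1) s t)
  | j, s, app a b => app (substT j s a) (substT j s b)
  | j, s, shift t => shift (substT (j+1) s t)
  | j, s, reset t => reset (substT j s t)

/-- Values are λ-abstractions. -/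
def IsValue (t : Tm) : Prop := ∃ b, t = lam b

/-- All free variables are `< n`. -/
def ClosedUnder : ℕ → Tm → Prop
  | n, var m => m < n
  | n, lam t => ClosedUnder (n+1) t
  | n, app a b => ClosedUnder n a ∧ ClosedUnder n b
  | n, shift t => ClosedUnder (n+1) t
  | n, reset t => ClosedUnder n t

def Closed (t : Tm) : Prop := ClosedUnder 0 t

/-- Pure evaluation contexts, interpreted inside-out:
    `appV b E` is `E[(λ.b) []]` and `appL E t` is `E[[] t]`. -/
inductive PCtx : Type
  | hole : PCtx
  | appV : Tm → PCtx → PCtx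
  | appL : PCtx → Tm → PCtx
  deriving DecidableEq

def PCtx.plug : PCtx → Tm → Tm
  | .hole, t => t
  | .appV b E, t => E.plug (app (lam b) t)
  | .appL E s, t => E.plug (app t s)

def PCtx.liftC (d : ℕ) : ℕ → PCtx → PCtx
  | _, .hole => .hole
  | c, .appV b E => .appV (liftT d (c+1) b) (PCtx.liftC d c E)
  | c, .appL E s => .appL (PCtx.liftC d c E) (liftT d c s)

/-- Composition of pure contexts: `(E.comp E').plug t = E.plug (E'.plug t)`. -/
def PCtx.comp : PCtx → PCtx → PCtx
  | E, .hole => E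
  | E, .appV b E' => .appV b (E.comp E')
  | E, .appL E' s => .appL (E.comp E') s

/-- The captured delimited continuation `λx.⟨E[x]⟩`. -/
def contOf (E : PCtx) : Tm := lam (reset ((PCtx.liftC 1 0 E).plug (var 0)))

/-- Call-by-value evaluation contexts, interpreted inside-out. -/
inductive ECtx : Type
  | hole : ECtx
  | appV : Tm → ECtx → ECtx
  | appL : ECtx → Tm → ECtx
  | resetC : ECtx → ECtx
  deriving DecidableEq

def ECtx.plug : ECtx → Tm → Tm
  | .hole, t => t
  | .appV b F, t => F.plug (app (lam b) t)
  | .appL F s, t => F.plug (app t s)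
  | .resetC F, t => F.plug (reset t)

def ClosedECtx : ECtx → Prop
  | .hole => True
  | .appV b F => ClosedUnder 1 b ∧ ClosedECtx F
  | .appL F s => ClosedECtx F ∧ Closed s
  | .resetC F => ClosedECtx F

/-- One-step reduction of λ_S. -/
inductive Red : Tm → Tm → Prop
  | beta (F : ECtx) (t v : Tm) (hv : IsValue v) :
      Red (F.plug (app (lam t) v)) (F.plug (substT 0 v t))
  | cap (F : ECtx) (E : PCtx) (t : Tm) :
      Red (F.plug (reset (E.plug (shift t)))) (F.plug (reset (substT 0 (contOf E) t)))
  | res (F : ECtx) (v : Tm) (hv : IsValue v) :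
      Red (F.plug (reset v)) (F.plug v)

def RedStar : Tm → Tm → Prop := Relation.ReflTransGen Red

/-- A term is stuck if it is not a value and cannot reduce. -/
def Stuck (t : Tm) : Prop := ¬ IsValue t ∧ ∀ u, ¬ Red t u

/-- Evaluation: reduce to an irreducible term. -/
def Eval (t t' : Tm) : Prop := RedStar t t' ∧ ∀ u, ¬ Red t' u

def IsRedex (r : Tm) : Prop :=
  (∃ t v, IsValue v ∧ r = app (lam t) v) ∨
  (∃ E s, r = reset (PCtx.plug E (shift s))) ∨
  (∃ v, IsValue v ∧ r = reset v)

/-- Labels of the LTS. -/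
inductive Label : Type
  | tau : Label
  | val : Tm → Label
  | ctx : PCtx → Label

/-- The labelled transition system for λ_S. -/
inductive Step : Tm → Label → Tm → Prop
  | beta {t v : Tm} (hv : IsValue v) :
      Step (app (lam t) v) .tau (substT 0 v t)
  | resetVal {v : Tm} (hv : IsValue v) :
      Step (reset v) .tau v
  | appL {t0 t0' t1 : Tm} :
      Step t0 .tau t0' → Step (app t0 t1) .tau (app t0' t1)
  | appR {v t t' : Tm} (hv : IsValue v) :
      Step t .tau t' → Step (app v t) .tau (app v t')
  | resetT {t t' : Tm} :
      Step t .tau t' → Step (reset t) .tau (reset t')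
  | resetCap {t t' : Tm} :
      Step t (.ctx .hole) t' → Step (reset t) .tau t'
  | lamApp {t v : Tm} (hv : IsValue v) :
      Step (lam t) (.val v) (substT 0 v t)
  | shiftCap {t : Tm} (E : PCtx) :
      Step (shift t) (.ctx E) (reset (substT 0 (contOf E) t))
  | capL {t0 t0' t1 : Tm} {E : PCtx} :
      Step t0 (.ctx (.appL E t1)) t0' → Step (app t0 t1) (.ctx E) t0'
  | capR {b t t' : Tm} {E : PCtx} :
      Step t (.ctx (.appV b E)) t' → Step (app (lam b) t) (.ctx E) t'

def TauStar : Tm → Tm → Prop := Relation.ReflTransGen (fun a b => Step a .tau b)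

/-- Weak delay transition: τ-steps, then an `l`-step if `l ≠ τ`. -/
def Weak (t : Tm) (l : Label) (t' : Tm) : Prop :=
  match l with
  | .tau => TauStar t t'
  | _ => ∃ u, TauStar t u ∧ Step u l t'

/-- Applicative simulation. -/
def IsSim (R : Tm → Tm → Prop) : Prop :=
  ∀ ⦃t0 t1⦄, R t0 t1 → ∀ ⦃l t0'⦄, Step t0 l t0' →
    ∃ t1', Weak t1 l t1' ∧ R t0' t1'

def IsBisim (R : Tm → Tm → Prop) : Prop := IsSim R ∧ IsSim (flip R)

/-- Applicative bisimilarity: the largest applicative bisimulation. -/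
def Bisim (t0 t1 : Tm) : Prop := ∃ R, IsBisim R ∧ R t0 t1

/-- Big-step applicative simulation. -/
def IsBigSim (R : Tm → Tm → Prop) : Prop :=
  ∀ ⦃t0 t1⦄, R t0 t1 → ∀ ⦃l t0'⦄, l ≠ Label.tau → Weak t0 l t0' →
    ∃ t1', Weak t1 l t1' ∧ R t0' t1'

def IsBigBisim (R : Tm → Tm → Prop) : Prop := IsBigSim R ∧ IsBigSim (flip R)

/-- Big-step applicative bisimilarity. -/
def BigBisim (t0 t1 : Tm) : Prop := ∃ R, IsBigBisim R ∧ R t0 t1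

/-- General contexts. -/
inductive Ctx : Type
  | hole : Ctx
  | lam : Ctx → Ctx
  | appL : Ctx → Tm → Ctx
  | appR : Tm → Ctx → Ctx
  | shift : Ctx → Ctx
  | reset : Ctx → Ctx

/-- Plugging a term in a general context (free variables may be captured). -/
def Ctx.plug : Ctx → Tm → Tm
  | .hole, t => t
  | .lam C, t => Tm.lam (C.plug t)
  | .appL C s, t => Tm.app (C.plug t) s
  | .appR s C, t => Tm.app s (C.plug t)
  | .shift C, t => Tm.shift (C.plug t)
  | .reset C, t => Tm.reset (C.plug t)

def CtxClosedUnder : ℕ → Ctx → Prop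
  | _, .hole => True
  | n, .lam C => CtxClosedUnder (n+1) C
  | n, .appL C s => CtxClosedUnder n C ∧ ClosedUnder n s
  | n, .appR s C => ClosedUnder n s ∧ CtxClosedUnder n C
  | n, .shift C => CtxClosedUnder (n+1) C
  | n, .reset C => CtxClosedUnder n C

def ClosedCtx (C : Ctx) : Prop := CtxClosedUnder 0 C

def EvalsToValue (t : Tm) : Prop := ∃ v, IsValue v ∧ Eval t v

def EvalsToStuck (t : Tm) : Prop := ∃ s, Stuck s ∧ Eval t s

/-- Contextual equivalence on closed terms. -/
def CtxEquiv (t0 t1 : Tm) : Prop :=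
  ∀ C : Ctx, ClosedCtx C →
    (EvalsToValue (C.plug t0) ↔ EvalsToValue (C.plug t1)) ∧
    (EvalsToStuck (C.plug t0) ↔ EvalsToStuck (C.plug t1))

/-- Contextual equivalence restricted to evaluation contexts. -/
def ECtxEquiv (t0 t1 : Tm) : Prop :=
  ∀ F : ECtx, ClosedECtx F →
    (EvalsToValue (F.plug t0) ↔ EvalsToValue (F.plug t1)) ∧
    (EvalsToStuck (F.plug t0) ↔ EvalsToStuck (F.plug t1))

/-- Lifting a substitution under a binder. -/
def liftSub (σ : ℕ → Tm) : ℕ → Tm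
  | 0 => var 0
  | n+1 => liftT 1 0 (σ n)

/-- Apply a substitution to all free variables of a term. -/
def applySub (σ : ℕ → Tm) : Tm → Tm
  | var n => σ n
  | lam t => lam (applySub (liftSub σ) t)
  | app a b => app (applySub σ a) (applySub σ b)
  | shift t => shift (applySub (liftSub σ) t)
  | reset t => reset (applySub σ t)

/-- A closing substitution maps every variable to a closed value. -/
def ClosingSub (σ : ℕ → Tm) : Prop := ∀ n, IsValue (σ n) ∧ Closed (σ n)

/-- Open extension of a relation on closed terms. -/
def OpenExt (R : Tm → Tm → Prop) (t0 t1 : Tm) : Prop :=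
  ∀ σ, ClosingSub σ → R (applySub σ t0) (applySub σ t1)

/-- Howe's closure of applicative bisimilarity (compatible refinement rules inlined). -/
inductive Howe : Tm → Tm → Prop
  | base {t0 t1} : OpenExt Bisim t0 t1 → Howe t0 t1
  | right {t0 t2 t1} : Howe t0 t2 → OpenExt Bisim t2 t1 → Howe t0 t1
  | compVar (n : ℕ) : Howe (var n) (var n)
  | compLam {t0 t1} : Howe t0 t1 → Howe (lam t0) (lam t1)
  | compApp {a0 a1 b0 b1} : Howe a0 a1 → Howe b0 b1 → Howe (app a0 b0) (app a1 b1)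
  | compShift {t0 t1} : Howe t0 t1 → Howe (shift t0) (shift t1)
  | compReset {t0 t1} : Howe t0 t1 → Howe (reset t0) (reset t1)

/-- Howe's closure restricted to closed terms. -/
def HoweC (t0 t1 : Tm) : Prop := Closed t0 ∧ Closed t1 ∧ Howe t0 t1

/-- Extension of Howe's closure to pure contexts. -/
inductive PCtxHowe : PCtx → PCtx → Prop
  | hole : PCtxHowe .hole .hole
  | appV {b0 b1 E0 E1} : Howe b0 b1 → PCtxHowe E0 E1 → PCtxHowe (.appV b0 E0) (.appV b1 E1)
  | appL {E0 E1 t0 t1} : PCtxHowe E0 E1 → Howe t0 t1 → PCtxHowe (.appL E0 t0) (.appL E1 t1)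

/-- Extension of Howe's closure to labels. -/
def LabHowe : Label → Label → Prop
  | .tau, .tau => True
  | .val v0, .val v1 => Closed v0 ∧ Closed v1 ∧ Howe v0 v1
  | .ctx E0, .ctx E1 => PCtxHowe E0 E1
  | _, _ => False

/-- ω = λx. x x -/
def omegaTm : Tm := lam (app (var 0) (var 0))

/-- Ω = ω ω, the standard diverging term. -/
def OmegaTm : Tm := app omegaTm omegaTm

/-- Every τ-reachable term can do a τ-step: only infinite τ-sequences. -/
def Diverges (t : Tm) : Prop := ∀ u, TauStar t u → ∃ u', Step u .tau u'

/-- No weak non-τ transition. -/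
def NoObs (t : Tm) : Prop := ∀ l t', l ≠ Label.tau → ¬ Weak t l t'

/-
The argument `⟨t1⟩` is a reset, and a λ-abstraction or a reset never performs a
capture (a context-labelled transition), while its τ-steps again yield a λ-abstraction or a
reset. Hence the only moves of either side are τ-steps of the argument, matched in lockstep, and
the final β-step, after which both sides are `⟨t0{v/x}⟩`.
-/

def IsLamOrReset (s : Tm) : Prop := (∃ b, s = lam b) ∨ (∃ w, s = reset w)

theorem Step.exists_reset_of_ctx {a a' : Tm} {E : PCtx} (h : Step a (.ctx E) a') :
    ∃ w, a' = reset w := by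
  generalize hl : Label.ctx E = l at h
  induction h generalizing E with
  | shiftCap => exact ⟨_, rfl⟩
  | capL _ ih => exact ih rfl
  | capR _ ih => exact ih rfl
  | _ => cases hl

theorem IsLamOrReset.not_step_ctx {s s' : Tm} {E : PCtx} (hs : IsLamOrReset s) :
    ¬ Step s (.ctx E) s' := by
  rcases hs with ⟨b, rfl⟩ | ⟨w, rfl⟩ <;> intro h <;> cases h

theorem IsLamOrReset.step_tau {s s' : Tm} (hs : IsLamOrReset s) (h : Step s .tau s') :
    IsLamOrReset s' := by
  rcases hs with ⟨b, rfl⟩ | ⟨w, rfl⟩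
  · cases h
  · cases h with
    | resetVal hv => exact Or.inl hv
    | resetT => exact Or.inr ⟨_, rfl⟩
    | resetCap h' => exact Or.inr h'.exists_reset_of_ctx

theorem Step.weak {t t' : Tm} {l : Label} (h : Step t l t') : Weak t l t' := by
  cases l with
  | tau => exact Relation.ReflTransGen.single h
  | val => exact ⟨t, Relation.ReflTransGen.refl, h⟩
  | ctx => exact ⟨t, Relation.ReflTransGen.refl, h⟩

inductive ResetLift : Tm → Tm → Prop
  | lift {t0 s : Tm} : IsLamOrReset s → ResetLift (reset (app (lam t0) s)) (app (lam (reset t0)) s)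
  | refl (t : Tm) : ResetLift t t

theorem ResetLift.sim_lift {t0 s t' : Tm} {l : Label} (hs : IsLamOrReset s)
    (h : Step (reset (app (lam t0) s)) l t') :
    ∃ u', Weak (app (lam (reset t0)) s) l u' ∧ ResetLift t' u' := by
  cases h with
  | resetVal hv => obtain ⟨_, ⟨⟩⟩ := hv
  | resetT h =>
    cases h with
    | beta hv => exact ⟨_, (Step.beta hv).weak, .refl _⟩
    | appL h => cases h
    | appR _ h => exact ⟨_, (Step.appR ⟨_, rfl⟩ h).weak, .lift (hs.step_tau h)⟩
  | resetCap h =>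
    cases h with
    | capL h => cases h
    | capR h => exact absurd h hs.not_step_ctx

theorem ResetLift.sim_lift_symm {t0 s t' : Tm} {l : Label} (hs : IsLamOrReset s)
    (h : Step (app (lam (reset t0)) s) l t') :
    ∃ u', Weak (reset (app (lam t0) s)) l u' ∧ ResetLift u' t' := by
  cases h with
  | beta hv => exact ⟨_, (Step.resetT (Step.beta hv)).weak, .refl _⟩
  | appL h => cases h
  | appR _ h => exact ⟨_, (Step.resetT (Step.appR ⟨_, rfl⟩ h)).weak, .lift (hs.step_tau h)⟩
  | capL h => cases h
  | capR h => exact absurd h hs.not_step_ctx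

theorem ResetLift.isBisim : IsBisim ResetLift := by
  constructor
  · rintro _ _ (⟨hs⟩ | t) l t' h
    · exact sim_lift hs h
    · exact ⟨t', h.weak, .refl _⟩
  · rintro _ _ (⟨hs⟩ | t) l t' h
    · exact sim_lift_symm hs h
    · exact ⟨t', h.weak, .refl _⟩

end LamS
open LamS LamS.Tm in
/-- ⟨(λx.t0) ⟨t1⟩⟩ ≈ (λx.⟨t0⟩) ⟨t1⟩. -/
theorem reset_lift_bisim :
    ∀ t0 t1 : Tm, ClosedUnder 1 t0 → Closed t1 →
      Bisim (reset (app (lam t0) (reset t1))) (app (lam (reset t0)) (reset t1)) := by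
  intro t0 t1 _ _
  exact ⟨ResetLift, ResetLift.isBisim, .lift (Or.inr ⟨t1, rfl⟩)⟩
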